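/- Let (S, μ) be a measure space, let E be a real inner product space, and let p > 1. Let G, U : S → E be strongly measurable maps with ∫_S ‖G‖^p dμ < ∞ and ∫_S ‖U‖^p dμ < ∞, and define h : S → ℝ by h(x) = ‖G(x)‖^{p−2} ⟨G(x), U(x) − G(x)⟩ (interpreted as 0 when G(x) = 0). If h is integrable and ∫_S h dμ = 0, then ∫_S ‖G‖^p dμ ≤ ∫_S ‖U‖^p dμ. -/

import Mathlib

open MeasureTheory
open scoped RealInnerProductSpace

/-!
By Cauchy–Schwarz and Young's inequality with exponents `p` and `p / (p - 1)`, pointwise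
`‖G‖^(p-2) ⟪G, U - G⟫ ≤ ‖G‖^(p-1) ‖U‖ - ‖G‖^p ≤ (‖U‖^p - ‖G‖^p) / p`.
Integrating, the left side vanishes, so `∫ ‖G‖^p ≤ ∫ ‖U‖^p`.
-/

theorem Real.rpow_sub_one_mul_le {p s t : ℝ} (hp : 1 < p) (hs : 0 ≤ s) (ht : 0 ≤ t) :
    s ^ (p - 1) * t ≤ (1 - p⁻¹) * s ^ p + p⁻¹ * t ^ p := by
  have hpq := Real.HolderConjugate.conjExponent hp
  have hyoung := Real.young_inequality_of_nonneg (Real.rpow_nonneg hs (p - 1)) ht hpq.symm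
  rwa [← Real.rpow_mul hs, hpq.sub_one_mul_conj, div_eq_inv_mul, div_eq_inv_mul,
    ← hpq.one_sub_inv] at hyoung

theorem rpow_norm_sub_two_mul_inner_sub_le {E : Type*} [NormedAddCommGroup E]
    [InnerProductSpace ℝ E] {p : ℝ} (hp : 1 < p) (a b : E) :
    ‖a‖ ^ (p - 2) * ⟪a, b - a⟫ ≤ p⁻¹ * (‖b‖ ^ p - ‖a‖ ^ p) := by
  have hna := norm_nonneg a
  have hcs : ⟪a, b - a⟫ ≤ ‖a‖ * ‖b‖ - ‖a‖ ^ (2 : ℝ) := by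
    rw [inner_sub_right, real_inner_self_eq_norm_sq, Real.rpow_two]
    linarith [real_inner_le_norm a b]
  calc ‖a‖ ^ (p - 2) * ⟪a, b - a⟫
      ≤ ‖a‖ ^ (p - 2) * (‖a‖ * ‖b‖ - ‖a‖ ^ (2 : ℝ)) :=
        mul_le_mul_of_nonneg_left hcs (Real.rpow_nonneg hna _)
    _ = ‖a‖ ^ (p - 1) * ‖b‖ - ‖a‖ ^ p := by
        rw [mul_sub, ← Real.rpow_add' hna (by linarith), ← mul_assoc,
          ← Real.rpow_add_one' hna (by linarith)]
        ring_nf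
    _ ≤ p⁻¹ * (‖b‖ ^ p - ‖a‖ ^ p) := by
        linarith [Real.rpow_sub_one_mul_le hp hna (norm_nonneg b)]

theorem comparison_energy_general {S : Type*} [MeasurableSpace S] (μ : Measure S)
    {E : Type*} [NormedAddCommGroup E] [InnerProductSpace ℝ E]
    (p : ℝ) (hp : 1 < p) (G U : S → E)
    (hGp : Integrable (fun x => ‖G x‖ ^ p) μ)
    (hUp : Integrable (fun x => ‖U x‖ ^ p) μ)
    (h : S → ℝ)
    (hdef : ∀ x, h x = ‖G x‖ ^ (p - 2) * ⟪G x, U x - G x⟫)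
    (hint : Integrable h μ) (hzero : ∫ x, h x ∂μ = 0) :
    ∫ x, ‖G x‖ ^ p ∂μ ≤ ∫ x, ‖U x‖ ^ p ∂μ := by
  have hmono := integral_mono (g := fun x => p⁻¹ * (‖U x‖ ^ p - ‖G x‖ ^ p)) hint
    ((hUp.sub hGp).const_mul p⁻¹)
    fun x => (hdef x).trans_le (rpow_norm_sub_two_mul_inner_sub_le hp (G x) (U x))
  rw [hzero, integral_const_mul, integral_sub hUp hGp] at hmono
  exact sub_nonneg.mp (nonneg_of_mul_nonneg_right hmono (inv_pos.mpr (by linarith)))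

/-- Abstract first comparison estimate: testing the homogeneous constant-coefficient
equation with `U - G` yields `∫ ‖G‖^p ≤ ∫ ‖U‖^p`. -/
theorem comparison_energy {S : Type*} [MeasurableSpace S] (μ : Measure S)
    {E : Type*} [NormedAddCommGroup E] [InnerProductSpace ℝ E]
    (p : ℝ) (hp : 1 < p) (G U : S → E)
    (hGm : StronglyMeasurable G) (hUm : StronglyMeasurable U)
    (hGp : Integrable (fun x => ‖G x‖ ^ p) μ)
    (hUp : Integrable (fun x => ‖U x‖ ^ p) μ)
    (h : S → ℝ)
    (hdef : ∀ x, h x = ‖G x‖ ^ (p - 2) * ⟪G x, U x - G x⟫)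
    (hG0 : ∀ x, G x = 0 → h x = 0)
    (hint : Integrable h μ) (hzero : ∫ x, h x ∂μ = 0) :
    ∫ x, ‖G x‖ ^ p ∂μ ≤ ∫ x, ‖U x‖ ^ p ∂μ :=
  comparison_energy_general μ p hp G U hGp hUp h hdef hint hzero
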